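/- Correctness of the Hyper Hoare Logic syntactic assignment transformation: for every closed hyper-assertion φ, every program variable x and every program expression E, the semantics of the transformed assertion is exactly the semantic substitution: ⟦A_x^E[φ]⟧ = { m : Set S | { s[x↦⟦E⟧(s)] | s ∈ m } ∈ ⟦φ⟧ }. Consequently the rule ⟨A_x^E[φ]⟩ x := E ⟨φ⟩ is valid in the nondeterministic instance, where ⟦x:=E⟧†(m) = { s[x↦⟦E⟧(s)] | s ∈ m }. -/

import Mathlib

open scoped Classical

/-! ## Program expressions and tests over stores -/

mutual
/-- Program expressions: variables, integer constants, tests, and arithmetic. -/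
inductive PExpr (Var : Type) : Type where
  | const (v : ℤ)
  | pvar (x : Var)
  | ofTest (b : PTest Var)
  | add (e₁ e₂ : PExpr Var)
  | sub (e₁ e₂ : PExpr Var)
  | mul (e₁ e₂ : PExpr Var)

/-- Tests over stores: Boolean combinations of primitive comparison tests. -/
inductive PTest (Var : Type) : Type where
  | tt
  | ff
  | eq (e₁ e₂ : PExpr Var)
  | le (e₁ e₂ : PExpr Var)
  | and (b₁ b₂ : PTest Var)
  | or (b₁ b₂ : PTest Var)
  | not (b : PTest Var)
end

mutual
/-- Evaluation of program expressions in a store. -/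
def peval {Var : Type} : PExpr Var → (Var → ℤ) → ℤ
  | .const v, _ => v
  | .pvar x, s => s x
  | .ofTest b, s => if ptval b s then 1 else 0
  | .add e₁ e₂, s => peval e₁ s + peval e₂ s
  | .sub e₁ e₂, s => peval e₁ s - peval e₂ s
  | .mul e₁ e₂, s => peval e₁ s * peval e₂ s

/-- Evaluation of tests in a store. -/
def ptval {Var : Type} : PTest Var → (Var → ℤ) → Bool
  | .tt, _ => Bool.true
  | .ff, _ => Bool.false
  | .eq e₁ e₂, s => decide (peval e₁ s = peval e₂ s)
  | .le e₁ e₂, s => decide (peval e₁ s ≤ peval e₂ s)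
  | .and b₁ b₂, s => ptval b₁ s && ptval b₂ s
  | .or b₁ b₂, s => ptval b₁ s || ptval b₂ s
  | .not b, s => ! ptval b s
end

/-! ## Hyper-expressions and hypertests -/

mutual
/-- Hyper-expressions: integer constants, value variables, terms `σ(x)`, lifted tests,
and arithmetic. -/
inductive HExpr (Var SVar VVar : Type) : Type where
  | const (v : ℤ)
  | vvar (v : VVar)
  | svar (σ : SVar) (x : Var)
  | ofTest (B : HTest Var SVar VVar)
  | add (e₁ e₂ : HExpr Var SVar VVar)
  | sub (e₁ e₂ : HExpr Var SVar VVar)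
  | mul (e₁ e₂ : HExpr Var SVar VVar)

/-- Hypertests: Boolean combinations and comparisons of hyper-expressions. -/
inductive HTest (Var SVar VVar : Type) : Type where
  | tt
  | ff
  | eq (e₁ e₂ : HExpr Var SVar VVar)
  | le (e₁ e₂ : HExpr Var SVar VVar)
  | and (B₁ B₂ : HTest Var SVar VVar)
  | or (B₁ B₂ : HTest Var SVar VVar)
  | not (B : HTest Var SVar VVar)
end

mutual
/-- Evaluation of hyper-expressions relative to environments for value variables and
(possibly unbound) state variables; `none` if an unbound state variable occurs. -/
def heval {Var SVar VVar : Type} (δ : VVar → ℤ) (ρ : SVar → Option (Var → ℤ)) :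
    HExpr Var SVar VVar → Option ℤ
  | .const v => some v
  | .vvar v => some (δ v)
  | .svar σ x => (ρ σ).map fun s => s x
  | .ofTest B => (htval δ ρ B).map fun b => if b then 1 else 0
  | .add e₁ e₂ => (heval δ ρ e₁).bind fun a => (heval δ ρ e₂).map fun b => a + b
  | .sub e₁ e₂ => (heval δ ρ e₁).bind fun a => (heval δ ρ e₂).map fun b => a - b
  | .mul e₁ e₂ => (heval δ ρ e₁).bind fun a => (heval δ ρ e₂).map fun b => a * b

/-- Evaluation of hypertests; `none` if an unbound state variable occurs. -/
def htval {Var SVar VVar : Type} (δ : VVar → ℤ) (ρ : SVar → Option (Var → ℤ)) :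
    HTest Var SVar VVar → Option Bool
  | .tt => some Bool.true
  | .ff => some Bool.false
  | .eq e₁ e₂ => (heval δ ρ e₁).bind fun a => (heval δ ρ e₂).map fun b => decide (a = b)
  | .le e₁ e₂ => (heval δ ρ e₁).bind fun a => (heval δ ρ e₂).map fun b => decide (a ≤ b)
  | .and B₁ B₂ => (htval δ ρ B₁).bind fun a => (htval δ ρ B₂).map fun b => a && b
  | .or B₁ B₂ => (htval δ ρ B₁).bind fun a => (htval δ ρ B₂).map fun b => a || b
  | .not B => (htval δ ρ B).map fun a => ! a
end

/-! ## Hyper-assertions and their semantics -/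

/-- Hyper-assertions. -/
inductive HAssert (Var SVar VVar : Type) : Type where
  | and (φ ψ : HAssert Var SVar VVar)
  | or (φ ψ : HAssert Var SVar VVar)
  | allV (v : VVar) (T : Set ℤ) (φ : HAssert Var SVar VVar)
  | exV (v : VVar) (T : Set ℤ) (φ : HAssert Var SVar VVar)
  | allS (σ : SVar) (φ : HAssert Var SVar VVar)
  | exS (σ : SVar) (φ : HAssert Var SVar VVar)
  | test (B : HTest Var SVar VVar)

/-- Semantics of hyper-assertions as sets of sets of stores, relative to environments
`δ` (value variables) and `ρ` (state variables; `none` = unbound). -/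
noncomputable def hsem {Var SVar VVar : Type} (δ : VVar → ℤ)
    (ρ : SVar → Option (Var → ℤ)) :
    HAssert Var SVar VVar → Set (Set (Var → ℤ))
  | .and φ ψ => hsem δ ρ φ ∩ hsem δ ρ ψ
  | .or φ ψ => hsem δ ρ φ ∪ hsem δ ρ ψ
  | .allV v T φ => ⋂ t ∈ T, hsem (Function.update δ v t) ρ φ
  | .exV v T φ => ⋃ t ∈ T, hsem (Function.update δ v t) ρ φ
  | .allS σ φ => { m | ∀ s ∈ m, m ∈ hsem δ (Function.update ρ σ (some s)) φ }
  | .exS σ φ => { m | ∃ s ∈ m, m ∈ hsem δ (Function.update ρ σ (some s)) φ }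
  | .test B => { m | htval δ ρ B = some Bool.true }

/-! ## Free variables and closedness -/

mutual
/-- Free state variables of a hyper-expression. -/
def efreeS {Var SVar VVar : Type} : HExpr Var SVar VVar → Set SVar
  | .const _ => ∅
  | .vvar _ => ∅
  | .svar σ _ => {σ}
  | .ofTest B => tfreeS B
  | .add e₁ e₂ => efreeS e₁ ∪ efreeS e₂
  | .sub e₁ e₂ => efreeS e₁ ∪ efreeS e₂
  | .mul e₁ e₂ => efreeS e₁ ∪ efreeS e₂

/-- Free state variables of a hypertest. -/
def tfreeS {Var SVar VVar : Type} : HTest Var SVar VVar → Set SVar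
  | .tt => ∅
  | .ff => ∅
  | .eq e₁ e₂ => efreeS e₁ ∪ efreeS e₂
  | .le e₁ e₂ => efreeS e₁ ∪ efreeS e₂
  | .and B₁ B₂ => tfreeS B₁ ∪ tfreeS B₂
  | .or B₁ B₂ => tfreeS B₁ ∪ tfreeS B₂
  | .not B => tfreeS B
end

mutual
/-- Free value variables of a hyper-expression. -/
def efreeV {Var SVar VVar : Type} : HExpr Var SVar VVar → Set VVar
  | .const _ => ∅
  | .vvar v => {v}
  | .svar _ _ => ∅
  | .ofTest B => tfreeV B
  | .add e₁ e₂ => efreeV e₁ ∪ efreeV e₂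
  | .sub e₁ e₂ => efreeV e₁ ∪ efreeV e₂
  | .mul e₁ e₂ => efreeV e₁ ∪ efreeV e₂

/-- Free value variables of a hypertest. -/
def tfreeV {Var SVar VVar : Type} : HTest Var SVar VVar → Set VVar
  | .tt => ∅
  | .ff => ∅
  | .eq e₁ e₂ => efreeV e₁ ∪ efreeV e₂
  | .le e₁ e₂ => efreeV e₁ ∪ efreeV e₂
  | .and B₁ B₂ => tfreeV B₁ ∪ tfreeV B₂
  | .or B₁ B₂ => tfreeV B₁ ∪ tfreeV B₂
  | .not B => tfreeV B
end

/-- Free state variables of a hyper-assertion. -/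
def afreeS {Var SVar VVar : Type} : HAssert Var SVar VVar → Set SVar
  | .and φ ψ => afreeS φ ∪ afreeS ψ
  | .or φ ψ => afreeS φ ∪ afreeS ψ
  | .allV _ _ φ => afreeS φ
  | .exV _ _ φ => afreeS φ
  | .allS σ φ => afreeS φ \ {σ}
  | .exS σ φ => afreeS φ \ {σ}
  | .test B => tfreeS B

/-- Free value variables of a hyper-assertion. -/
def afreeV {Var SVar VVar : Type} : HAssert Var SVar VVar → Set VVar
  | .and φ ψ => afreeV φ ∪ afreeV ψ
  | .or φ ψ => afreeV φ ∪ afreeV ψ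
  | .allV v _ φ => afreeV φ \ {v}
  | .exV v _ φ => afreeV φ \ {v}
  | .allS _ φ => afreeV φ
  | .exS _ φ => afreeV φ
  | .test B => tfreeV B

/-- A hyper-assertion is closed if it has no free state or value variables. -/
def closedA {Var SVar VVar : Type} (φ : HAssert Var SVar VVar) : Prop :=
  afreeS φ = ∅ ∧ afreeV φ = ∅

/-! ## The transformation `E[σ]`, `b[σ]` -/

mutual
/-- `E[σ]`: replace every program variable `y` of `E` by `σ(y)`. -/
def pToH {Var SVar VVar : Type} (σ : SVar) : PExpr Var → HExpr Var SVar VVar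
  | .const v => .const v
  | .pvar x => .svar σ x
  | .ofTest b => .ofTest (tToH σ b)
  | .add e₁ e₂ => .add (pToH σ e₁) (pToH σ e₂)
  | .sub e₁ e₂ => .sub (pToH σ e₁) (pToH σ e₂)
  | .mul e₁ e₂ => .mul (pToH σ e₁) (pToH σ e₂)

/-- `b[σ]`: replace every program variable `y` of `b` by `σ(y)`. -/
def tToH {Var SVar VVar : Type} (σ : SVar) : PTest Var → HTest Var SVar VVar
  | .tt => .tt
  | .ff => .ff
  | .eq e₁ e₂ => .eq (pToH σ e₁) (pToH σ e₂)
  | .le e₁ e₂ => .le (pToH σ e₁) (pToH σ e₂)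
  | .and b₁ b₂ => .and (tToH σ b₁) (tToH σ b₂)
  | .or b₁ b₂ => .or (tToH σ b₁) (tToH σ b₂)
  | .not b => .not (tToH σ b)
end

/-! ## Syntactic substitution of a hyper-expression for `σ(x)` -/

mutual
/-- Substitute the hyper-expression `h` for every occurrence of the term `σ₀(x₀)`. -/
def esubst {Var SVar VVar : Type} [DecidableEq Var] [DecidableEq SVar] (σ₀ : SVar) (x₀ : Var) (h : HExpr Var SVar VVar) :
    HExpr Var SVar VVar → HExpr Var SVar VVar
  | .const v => .const v
  | .vvar v => .vvar v
  | .svar σ x => if σ = σ₀ ∧ x = x₀ then h else .svar σ x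
  | .ofTest B => .ofTest (tsubst σ₀ x₀ h B)
  | .add e₁ e₂ => .add (esubst σ₀ x₀ h e₁) (esubst σ₀ x₀ h e₂)
  | .sub e₁ e₂ => .sub (esubst σ₀ x₀ h e₁) (esubst σ₀ x₀ h e₂)
  | .mul e₁ e₂ => .mul (esubst σ₀ x₀ h e₁) (esubst σ₀ x₀ h e₂)

/-- Substitute the hyper-expression `h` for every occurrence of `σ₀(x₀)` in a hypertest. -/
def tsubst {Var SVar VVar : Type} [DecidableEq Var] [DecidableEq SVar] (σ₀ : SVar) (x₀ : Var) (h : HExpr Var SVar VVar) :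
    HTest Var SVar VVar → HTest Var SVar VVar
  | .tt => .tt
  | .ff => .ff
  | .eq e₁ e₂ => .eq (esubst σ₀ x₀ h e₁) (esubst σ₀ x₀ h e₂)
  | .le e₁ e₂ => .le (esubst σ₀ x₀ h e₁) (esubst σ₀ x₀ h e₂)
  | .and B₁ B₂ => .and (tsubst σ₀ x₀ h B₁) (tsubst σ₀ x₀ h B₂)
  | .or B₁ B₂ => .or (tsubst σ₀ x₀ h B₁) (tsubst σ₀ x₀ h B₂)
  | .not B => .not (tsubst σ₀ x₀ h B)
end

/-- Capture-avoiding substitution of `h` for `σ₀(x₀)` in a hyper-assertion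
(stopping at binders that shadow `σ₀`). -/
def asubst {Var SVar VVar : Type} [DecidableEq Var] [DecidableEq SVar] (σ₀ : SVar) (x₀ : Var) (h : HExpr Var SVar VVar) :
    HAssert Var SVar VVar → HAssert Var SVar VVar
  | .and φ ψ => .and (asubst σ₀ x₀ h φ) (asubst σ₀ x₀ h ψ)
  | .or φ ψ => .or (asubst σ₀ x₀ h φ) (asubst σ₀ x₀ h ψ)
  | .allV v T φ => .allV v T (asubst σ₀ x₀ h φ)
  | .exV v T φ => .exV v T (asubst σ₀ x₀ h φ)
  | .allS σ φ => if σ = σ₀ then .allS σ φ else .allS σ (asubst σ₀ x₀ h φ)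
  | .exS σ φ => if σ = σ₀ then .exS σ φ else .exS σ (asubst σ₀ x₀ h φ)
  | .test B => .test (tsubst σ₀ x₀ h B)

/-- Number of assertion connectives (substitution-invariant size measure). -/
def asize {Var SVar VVar : Type} : HAssert Var SVar VVar → ℕ
  | .and φ ψ => asize φ + asize ψ + 1
  | .or φ ψ => asize φ + asize ψ + 1
  | .allV _ _ φ => asize φ + 1
  | .exV _ _ φ => asize φ + 1
  | .allS _ φ => asize φ + 1
  | .exS _ φ => asize φ + 1
  | .test _ => 0

theorem asize_asubst {Var SVar VVar : Type} [DecidableEq Var] [DecidableEq SVar] (σ₀ : SVar) (x₀ : Var)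
    (h : HExpr Var SVar VVar) (φ : HAssert Var SVar VVar) :
    asize (asubst σ₀ x₀ h φ) = asize φ := by
  induction φ with
  | and φ ψ ihφ ihψ => simp [asubst, asize, ihφ, ihψ]
  | or φ ψ ihφ ihψ => simp [asubst, asize, ihφ, ihψ]
  | allV v T φ ih => simp [asubst, asize, ih]
  | exV v T φ ih => simp [asubst, asize, ih]
  | allS σ φ ih =>
      by_cases hσ : σ = σ₀ <;> simp [asubst, asize, hσ, ih]
  | exS σ φ ih =>
      by_cases hσ : σ = σ₀ <;> simp [asubst, asize, hσ, ih]
  | test B => simp [asubst, asize]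

/-! ## The syntactic assignment transformation `A_x^E` -/

/-- The Hyper Hoare Logic syntactic transformation `A_x^E` for assignments: it commutes
with `∧`, `∨` and the value quantifiers;
`A_x^E[∀⟨σ⟩.φ] = ∀⟨σ⟩. A_x^E[φ[E[σ]/σ(x)]]`,
`A_x^E[∃⟨σ⟩.φ] = ∃⟨σ⟩. A_x^E[φ[E[σ]/σ(x)]]`, and `A_x^E[B] = B`. -/
def Atrans {Var SVar VVar : Type} [DecidableEq Var] [DecidableEq SVar] (x : Var) (E : PExpr Var) :
    HAssert Var SVar VVar → HAssert Var SVar VVar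
  | .and φ ψ => .and (Atrans x E φ) (Atrans x E ψ)
  | .or φ ψ => .or (Atrans x E φ) (Atrans x E ψ)
  | .allV v T φ => .allV v T (Atrans x E φ)
  | .exV v T φ => .exV v T (Atrans x E φ)
  | .allS σ φ => .allS σ (Atrans x E (asubst σ x (pToH σ E) φ))
  | .exS σ φ => .exS σ (Atrans x E (asubst σ x (pToH σ E) φ))
  | .test B => .test B
termination_by φ => asize φ
decreasing_by all_goals (simp only [asize_asubst, asize]; omega)

/-!
Since `E[σ]` evaluates to `⟦E⟧(s)` whenever `σ` is bound to `s`, replacing `σ(x)` by `E[σ]`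
has the same effect as rebinding `σ` to `s[x↦⟦E⟧(s)]`. Hence, under a state quantifier
`∀⟨σ⟩` (or `∃⟨σ⟩`) ranging over `m`, the assertion `φ[E[σ]/σ(x)]` says about `m` what `φ`
says about the image of `m` under the assignment, and induction on `φ` along the recursion
of `A_x^E` does the rest.
-/

section Evaluation

variable {Var SVar VVar : Type}

mutual
theorem heval_pToH (δ : VVar → ℤ) (ρ : SVar → Option (Var → ℤ)) {σ : SVar} {s : Var → ℤ}
    (hσ : ρ σ = some s) : ∀ E : PExpr Var, heval δ ρ (pToH σ E) = some (peval E s)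
  | .const _ => rfl
  | .pvar _ => by simp [pToH, heval, peval, hσ]
  | .ofTest b => by simp [pToH, heval, peval, htval_tToH δ ρ hσ b]
  | .add e₁ e₂ | .sub e₁ e₂ | .mul e₁ e₂ => by
      simp [pToH, heval, peval, heval_pToH δ ρ hσ e₁, heval_pToH δ ρ hσ e₂]

theorem htval_tToH (δ : VVar → ℤ) (ρ : SVar → Option (Var → ℤ)) {σ : SVar} {s : Var → ℤ}
    (hσ : ρ σ = some s) : ∀ b : PTest Var, htval δ ρ (tToH σ b) = some (ptval b s)
  | .tt | .ff => rfl
  | .eq e₁ e₂ | .le e₁ e₂ => by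
      simp [tToH, htval, ptval, heval_pToH δ ρ hσ e₁, heval_pToH δ ρ hσ e₂]
  | .and b₁ b₂ | .or b₁ b₂ => by
      simp [tToH, htval, ptval, htval_tToH δ ρ hσ b₁, htval_tToH δ ρ hσ b₂]
  | .not b => by simp [tToH, htval, ptval, htval_tToH δ ρ hσ b]
end

variable [DecidableEq Var] [DecidableEq SVar]

mutual
theorem heval_esubst (δ : VVar → ℤ) {ρ : SVar → Option (Var → ℤ)} {σ₀ : SVar} {x₀ : Var}
    {h : HExpr Var SVar VVar} {s : Var → ℤ} {v : ℤ} (hσ₀ : ρ σ₀ = some s)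
    (hh : heval δ ρ h = some v) :
    ∀ e : HExpr Var SVar VVar, heval δ ρ (esubst σ₀ x₀ h e)
      = heval δ (Function.update ρ σ₀ (some (Function.update s x₀ v))) e
  | .const _ | .vvar _ => rfl
  | .svar σ y => by
      by_cases hσ : σ = σ₀
      · subst hσ
        by_cases hy : y = x₀
        · subst hy; simp [esubst, heval, hh]
        · simp [esubst, heval, hσ₀, hy]
      · simp [esubst, heval, hσ]
  | .ofTest B => by simp [esubst, heval, htval_tsubst δ hσ₀ hh B]
  | .add e₁ e₂ | .sub e₁ e₂ | .mul e₁ e₂ => by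
      simp [esubst, heval, heval_esubst δ hσ₀ hh e₁, heval_esubst δ hσ₀ hh e₂]

theorem htval_tsubst (δ : VVar → ℤ) {ρ : SVar → Option (Var → ℤ)} {σ₀ : SVar} {x₀ : Var}
    {h : HExpr Var SVar VVar} {s : Var → ℤ} {v : ℤ} (hσ₀ : ρ σ₀ = some s)
    (hh : heval δ ρ h = some v) :
    ∀ B : HTest Var SVar VVar, htval δ ρ (tsubst σ₀ x₀ h B)
      = htval δ (Function.update ρ σ₀ (some (Function.update s x₀ v))) B
  | .tt | .ff => rfl
  | .eq e₁ e₂ | .le e₁ e₂ => by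
      simp [tsubst, htval, heval_esubst δ hσ₀ hh e₁, heval_esubst δ hσ₀ hh e₂]
  | .and B₁ B₂ | .or B₁ B₂ => by
      simp [tsubst, htval, htval_tsubst δ hσ₀ hh B₁, htval_tsubst δ hσ₀ hh B₂]
  | .not B => by simp [tsubst, htval, htval_tsubst δ hσ₀ hh B]
end

end Evaluation

section Semantics

-- `hsem` binds state variables through the classical `DecidableEq SVar` instance; using the
-- same instance here lets `Function.update_comm` and `Function.update_idem` apply.
variable {Var SVar VVar : Type} [DecidableEq Var]

theorem hsem_asubst_pToH {σ₀ : SVar} {x₀ : Var} (E : PExpr Var) (φ : HAssert Var SVar VVar)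
    (δ : VVar → ℤ) {ρ : SVar → Option (Var → ℤ)} {s : Var → ℤ} (hσ₀ : ρ σ₀ = some s) :
    hsem δ ρ (asubst σ₀ x₀ (pToH σ₀ E) φ)
      = hsem δ (Function.update ρ σ₀ (some (Function.update s x₀ (peval E s)))) φ := by
  induction φ generalizing δ ρ with
  | and φ ψ ihφ ihψ | or φ ψ ihφ ihψ => simp only [asubst, hsem, ihφ δ hσ₀, ihψ δ hσ₀]
  | allV v T φ ih | exV v T φ ih => simp only [asubst, hsem, ih _ hσ₀]
  | allS σ φ ih | exS σ φ ih =>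
      by_cases hσ : σ = σ₀
      · subst hσ
        simp only [asubst, if_true, hsem, Function.update_idem]
      · have hσ₀' (t : Var → ℤ) : Function.update ρ σ (some t) σ₀ = some s := by
          rwa [Function.update_of_ne (Ne.symm hσ)]
        simp only [asubst, hσ, if_false, hsem, ih δ (hσ₀' _), Function.update_comm hσ]
  | test B => simp only [asubst, hsem, htval_tsubst δ hσ₀ (heval_pToH δ ρ hσ₀ E) B]

theorem hsem_Atrans (x : Var) (E : PExpr Var) (φ : HAssert Var SVar VVar) (δ : VVar → ℤ)
    (ρ : SVar → Option (Var → ℤ)) :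
    hsem δ ρ (Atrans x E φ)
      = { m | (fun s => Function.update s x (peval E s)) '' m ∈ hsem δ ρ φ } := by
  induction φ using Atrans.induct x E generalizing δ ρ with
  | x_2 => infer_instance -- the instance of `asubst` in the premises of `Atrans.induct`
  | case1 φ ψ ihφ ihψ | case2 φ ψ ihφ ihψ => simp only [Atrans, hsem, ihφ, ihψ]; rfl
  | case3 v T φ ih | case4 v T φ ih =>
      ext m; simp only [Atrans, hsem, ih, Set.mem_iInter, Set.mem_iUnion, Set.mem_ofPred_eq]
  | case5 σ φ ih | case6 σ φ ih =>
      ext m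
      simp only [Atrans, hsem, ih, Set.mem_ofPred_eq, Set.forall_mem_image, Set.exists_mem_image,
        hsem_asubst_pToH E φ δ (Function.update_self σ _ ρ), Function.update_idem]
  | case7 B => rw [Atrans]; rfl

end Semantics

open scoped Classical in
/-- **Correctness of the Hyper Hoare Logic syntactic assignment transformation**: for
every closed hyper-assertion `φ`, `⟦A_x^E[φ]⟧ = {m | {s[x↦⟦E⟧(s)] | s ∈ m} ∈ ⟦φ⟧}`;
consequently the rule `⟨A_x^E[φ]⟩ x := E ⟨φ⟩` is valid, where
`⟦x:=E⟧†(m) = {s[x↦⟦E⟧(s)] | s ∈ m}`. -/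
theorem hhl_assign_transformation_correct {Var SVar VVar : Type}
    [DecidableEq Var] [DecidableEq SVar]
    (x : Var) (E : PExpr Var) (φ : HAssert Var SVar VVar) (hcl : closedA φ)
    (δ : VVar → ℤ) (ρ : SVar → Option (Var → ℤ)) :
    hsem δ ρ (Atrans x E φ)
        = { m : Set (Var → ℤ) |
            ((fun s => Function.update s x (peval E s)) '' m) ∈ hsem δ ρ φ } ∧
      ∀ m ∈ hsem δ ρ (Atrans x E φ),
        ((fun s => Function.update s x (peval E s)) '' m) ∈ hsem δ ρ φ := by
  obtain rfl : ‹DecidableEq SVar› = fun a b => Classical.propDecidable (a = b) :=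
    Subsingleton.elim _ _
  have hsem_eq := hsem_Atrans x E φ δ ρ
  exact ⟨hsem_eq, fun m hm => by rwa [hsem_eq] at hm⟩
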